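/- A ring R is strongly periodic if and only if the quotient R/P(R) is a potent ring (every element x of R/P(R) satisfies x = x^n for some n ≥ 2). -/

import Mathlib

/-!
Elements of the prime radical are nilpotent, because a two-sided ideal maximal among those
avoiding the powers of a non-nilpotent `x` is prime. So if `R/P(R)` is potent, `2 ^ n - 2` is
nilpotent for some `n ≥ 2` and `R` has positive characteristic `N`. If moreover `a ^ n - a` is
nilpotent, `a` is a root of the monic integer polynomial `(X ^ n - X) ^ k`; the remainders of the
`X ^ m` modulo it, with coefficients read in `ℤ/N`, take finitely many values, so `a ^ i = a ^ j`
for some `i < j`. Then `a ^ (i (n - 1) + 1)` is potent, commutes with `a`, and is congruent to `a`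
modulo `P(R)`.
-/

/-- A two-sided ideal `P` is prime if it is proper and `aRb ⊆ P` implies `a ∈ P` or `b ∈ P`. -/
def TwoSidedIdeal.IsPrime {R : Type*} [Ring R] (P : TwoSidedIdeal R) : Prop :=
  (P : Set R) ≠ Set.univ ∧ ∀ a b : R, (∀ r : R, a * r * b ∈ P) → a ∈ P ∨ b ∈ P

/-- The prime radical `P(R)`: the intersection of all prime (two-sided) ideals of `R`. -/
def primeRadical (R : Type*) [Ring R] : TwoSidedIdeal R :=
  sInf {P : TwoSidedIdeal R | P.IsPrime}

/-- An element `p` is potent if `p = p ^ m` for some `m ≥ 2`. -/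
def IsPotent {R : Type*} [Ring R] (p : R) : Prop :=
  ∃ m : ℕ, 2 ≤ m ∧ p = p ^ m

/-- A ring is strongly periodic if every element is the sum of a commuting potent element
and an element of the prime radical. -/
def StronglyPeriodicRing (R : Type*) [Ring R] : Prop :=
  ∀ a : R, ∃ p : R, IsPotent p ∧ a - p ∈ primeRadical R ∧ a * p = p * a

open Polynomial

namespace TwoSidedIdeal

variable {R : Type*} [Ring R]

theorem sub_mem_iff_coe_eq {I : TwoSidedIdeal R} {a b : R} :
    a - b ∈ I ↔ (a : I.ringCon.Quotient) = b :=
  (I.rel_iff a b).symm.trans (RingCon.eq _).symm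

theorem exists_mem_iff_of_isChain {c : Set (TwoSidedIdeal R)} (hc : IsChain (· ≤ ·) c)
    (hne : c.Nonempty) : ∃ U : TwoSidedIdeal R, ∀ x, x ∈ U ↔ ∃ I ∈ c, x ∈ I := by
  obtain ⟨I₀, hI₀⟩ := hne
  refine ⟨.mk' {x | ∃ I ∈ c, x ∈ I} ⟨I₀, hI₀, I₀.zero_mem⟩ ?_
    (fun ⟨I, hI, hx⟩ ↦ ⟨I, hI, I.neg_mem hx⟩)
    (fun ⟨I, hI, hx⟩ ↦ ⟨I, hI, I.mul_mem_left _ _ hx⟩)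
    (fun ⟨I, hI, hx⟩ ↦ ⟨I, hI, I.mul_mem_right _ _ hx⟩), fun x ↦ mem_mk' ..⟩
  rintro x y ⟨I, hI, hx⟩ ⟨J, hJ, hy⟩
  rcases hc.total hI hJ with hIJ | hJI
  · exact ⟨J, hJ, J.add_mem (hIJ hx) hy⟩
  · exact ⟨I, hI, I.add_mem hx (hJI hy)⟩

theorem mul_mem_of_mem_span_insert {M : TwoSidedIdeal R} {a b u v : R}
    (hab : ∀ r, a * r * b ∈ M) (hu : u ∈ span (insert a (M : Set R)))
    (hv : v ∈ span (insert b (M : Set R))) : u * v ∈ M := by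
  have haR : ∀ v ∈ span (insert b (M : Set R)), ∀ r, a * r * v ∈ M := by
    intro v hv
    induction hv using span_induction with
    | mem x hx =>
      rcases hx with rfl | hx
      exacts [hab, fun r ↦ M.mul_mem_left _ _ hx]
    | zero => simp [M.zero_mem]
    | add x y _ _ hx hy => intro r; rw [mul_add]; exact M.add_mem (hx r) (hy r)
    | neg x _ hx => intro r; rw [mul_neg]; exact M.neg_mem (hx r)
    | left_absorb s x _ hx => intro r; rw [← mul_assoc, mul_assoc a]; exact hx _
    | right_absorb s x _ hx => intro r; rw [← mul_assoc]; exact M.mul_mem_right _ _ (hx r)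
  induction hu using span_induction generalizing v with
  | mem x hx =>
    rcases hx with rfl | hx
    exacts [by simpa using haR v hv 1, M.mul_mem_right _ _ hx]
  | zero => simp [M.zero_mem]
  | add x y _ _ hx hy => rw [add_mul]; exact M.add_mem (hx hv) (hy hv)
  | neg x _ hx => rw [neg_mul]; exact M.neg_mem (hx hv)
  | left_absorb s x _ hx => rw [mul_assoc]; exact M.mul_mem_left _ _ (hx hv)
  | right_absorb s x _ hx => rw [mul_assoc]; exact hx (mul_mem_left _ _ _ hv)

theorem isPrime_of_maximal_forall_pow_notMem {x : R} {M : TwoSidedIdeal R}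
    (hM : Maximal (fun I : TwoSidedIdeal R ↦ ∀ n, x ^ n ∉ I) M) : M.IsPrime := by
  have hpow : ∀ a ∉ M, ∃ n, x ^ n ∈ span (insert a (M : Set R)) := by
    intro a ha
    by_contra! h
    exact ha (hM.2 h (fun y hy ↦ subset_span (Set.mem_insert_of_mem _ hy))
      (subset_span (Set.mem_insert a _)))
  refine ⟨fun h ↦ hM.1 0 (by simp [← SetLike.mem_coe, h]), fun a b hab ↦ ?_⟩
  by_contra! h
  obtain ⟨i, hi⟩ := hpow a h.1
  obtain ⟨j, hj⟩ := hpow b h.2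
  exact hM.1 (i + j) (pow_add x i j ▸ mul_mem_of_mem_span_insert hab hi hj)

theorem exists_isPrime_forall_pow_notMem {x : R} (hx : ¬IsNilpotent x) :
    ∃ M : TwoSidedIdeal R, M.IsPrime ∧ ∀ n, x ^ n ∉ M := by
  have hchain : ∀ c ⊆ {I : TwoSidedIdeal R | ∀ n, x ^ n ∉ I}, IsChain (· ≤ ·) c →
      ∀ I ∈ c, ∃ U ∈ {I : TwoSidedIdeal R | ∀ n, x ^ n ∉ I}, ∀ J ∈ c, J ≤ U := by
    intro c hcS hc I hI
    obtain ⟨U, hU⟩ := exists_mem_iff_of_isChain hc ⟨I, hI⟩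
    refine ⟨U, fun n hn ↦ ?_, fun J hJ y hy ↦ (hU y).2 ⟨J, hJ, hy⟩⟩
    obtain ⟨J, hJ, hxJ⟩ := (hU _).1 hn
    exact hcS hJ n hxJ
  obtain ⟨M, -, hM⟩ := zorn_le_nonempty₀ _ hchain ⊥ fun n hn ↦ hx ⟨n, (mem_bot R).1 hn⟩
  exact ⟨M, isPrime_of_maximal_forall_pow_notMem hM, hM.1⟩

end TwoSidedIdeal

theorem isNilpotent_of_mem_primeRadical {R : Type*} [Ring R] {x : R}
    (hx : x ∈ primeRadical R) : IsNilpotent x := by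
  by_contra h
  obtain ⟨M, hMprime, hM⟩ := TwoSidedIdeal.exists_isPrime_forall_pow_notMem h
  exact hM 1 (by simpa using (sInf_le hMprime : primeRadical R ≤ M) hx)

section Powers

variable {M : Type*} [Monoid M] {a : M}

theorem pow_add_mul_eq_pow_of_pow_eq_pow {i j t : ℕ} (h : a ^ i = a ^ j) (hij : i ≤ j)
    (ht : i ≤ t) (s : ℕ) : a ^ (t + (j - i) * s) = a ^ t := by
  have step : ∀ u, i ≤ u → a ^ (u + (j - i)) = a ^ u := fun u hu ↦
    calc a ^ (u + (j - i)) = a ^ (u - i) * a ^ j := by rw [← pow_add]; congr 1; omega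
      _ = a ^ u := by rw [← h, ← pow_add, Nat.sub_add_cancel hu]
  induction s with
  | zero => simp
  | succ s ih => rw [mul_add_one, ← add_assoc, step _ (Nat.le_add_right_of_le ht), ih]

theorem pow_mul_sub_one_add_one_eq_self {n : ℕ} (h : a ^ n = a) (r : ℕ) :
    a ^ (r * (n - 1) + 1) = a := by
  induction r with
  | zero => simp
  | succ r ih =>
    rw [add_one_mul, add_right_comm, pow_add, ih]
    rcases n with _ | n
    · simp
    · simpa [pow_succ'] using h

end Powers

theorem isPotent_pow_of_pow_eq_pow {R : Type*} [Ring R] {a : R} {i j m : ℕ}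
    (h : a ^ i = a ^ j) (hij : i < j) (him : i ≤ m) : IsPotent (a ^ m) :=
  ⟨j - i + 1, by omega, by
    rw [← pow_mul, show m * (j - i + 1) = m + (j - i) * m by ring,
      pow_add_mul_eq_pow_of_pow_eq_pow h hij.le him]⟩

theorem exists_natCast_eq_zero_of_isNilpotent_two_pow_sub_two {R : Type*} [Ring R] {n : ℕ}
    (hn : 2 ≤ n) (h : IsNilpotent ((2 : R) ^ n - 2)) : ∃ N : ℕ, N ≠ 0 ∧ (N : R) = 0 := by
  obtain ⟨k, hk⟩ := h
  have h4 : 2 ^ 2 ≤ 2 ^ n := Nat.pow_le_pow_right two_pos hn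
  refine ⟨(2 ^ n - 2) ^ k, pow_ne_zero _ (by omega), ?_⟩
  rw [Nat.cast_pow, Nat.cast_sub (by omega), Nat.cast_pow, Nat.cast_ofNat, hk]

theorem exists_pow_eq_pow_of_aeval_eq_zero {R : Type*} [Ring R] {N : ℕ} (hN0 : N ≠ 0)
    (hN : (N : R) = 0) {g : ℤ[X]} (hg : g.Monic) {a : R} (ha : aeval a g = 0) :
    ∃ i j, i < j ∧ a ^ i = a ^ j := by
  have : NeZero N := ⟨hN0⟩
  obtain ⟨i, j, hne, hij⟩ := Finite.exists_ne_map_eq_of_infinite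
    fun m (k : Fin g.natDegree) ↦ ((X ^ m %ₘ g).coeff k : ZMod N)
  have hdvd : C (N : ℤ) ∣ X ^ j %ₘ g - X ^ i %ₘ g := by
    rw [C_dvd_iff_dvd_coeff]
    intro k
    rcases lt_or_ge k g.natDegree with hk | hk
    · rw [coeff_sub, ← ZMod.intCast_eq_intCast_iff_dvd_sub]
      exact congrFun hij ⟨k, hk⟩
    · have hlt : ∀ m, (X ^ m %ₘ g).degree < k := fun m ↦
        (degree_modByMonic_lt _ hg).trans_le (degree_le_of_natDegree_le hk)
      simp [coeff_eq_zero_of_degree_lt (hlt _)]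
  obtain ⟨s, hs⟩ := hdvd
  have hrem : ∀ m, aeval a (X ^ m %ₘ g) = a ^ m := fun m ↦ by
    rw [aeval_modByMonic_eq_self_of_root ha, map_pow, aeval_X]
  have hpow : a ^ j - a ^ i = 0 := by
    rw [← hrem, ← hrem, ← map_sub, hs, map_mul, aeval_C, algebraMap_int_eq, eq_intCast,
      Int.cast_natCast, hN, zero_mul]
  rcases hne.lt_or_gt with h | h
  · exact ⟨i, j, h, (sub_eq_zero.1 hpow).symm⟩
  · exact ⟨j, i, h, sub_eq_zero.1 hpow⟩

theorem exists_isPotent_pow_sub_mem_of_quotient_potent {R : Type*} [Ring R]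
    (I : TwoSidedIdeal R) (hI : ∀ x ∈ I, IsNilpotent x)
    (H : ∀ x : I.ringCon.Quotient, ∃ n : ℕ, 2 ≤ n ∧ x = x ^ n) (a : R) :
    ∃ m, IsPotent (a ^ m) ∧ a - a ^ m ∈ I := by
  have hpow_sub_mem {b : R} {n : ℕ} (hb : (b : I.ringCon.Quotient) = b ^ n) : b ^ n - b ∈ I :=
    TwoSidedIdeal.sub_mem_iff_coe_eq.2 (by rw [RingCon.coe_pow, ← hb])
  obtain ⟨N, hN0, hN⟩ : ∃ N : ℕ, N ≠ 0 ∧ (N : R) = 0 := by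
    obtain ⟨n, hn, h2⟩ := H (2 : R)
    exact exists_natCast_eq_zero_of_isNilpotent_two_pow_sub_two hn (hI _ (hpow_sub_mem h2))
  obtain ⟨n, hn, ha⟩ := H a
  obtain ⟨k, hk⟩ := hI _ (hpow_sub_mem ha)
  have hg : ((X ^ n - X : ℤ[X]) ^ k).Monic :=
    (monic_X_pow_sub (degree_X_le.trans_lt (by exact_mod_cast hn))).pow k
  obtain ⟨i, j, hij, hpow⟩ := exists_pow_eq_pow_of_aeval_eq_zero hN0 hN hg (by simpa using hk)
  have him : i ≤ i * (n - 1) + 1 := by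
    have : 1 ≤ n - 1 := by omega
    nlinarith
  refine ⟨i * (n - 1) + 1, isPotent_pow_of_pow_eq_pow hpow hij him, ?_⟩
  rw [TwoSidedIdeal.sub_mem_iff_coe_eq, RingCon.coe_pow, pow_mul_sub_one_add_one_eq_self ha.symm]

theorem stronglyPeriodic_iff_quotient_potent (R : Type*) [Ring R] :
    StronglyPeriodicRing R ↔
      ∀ x : (primeRadical R).ringCon.Quotient, ∃ n : ℕ, 2 ≤ n ∧ x = x ^ n := by
  constructor
  · intro h x
    obtain ⟨a, rfl⟩ := RingCon.mk'_surjective _ x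
    obtain ⟨p, ⟨m, hm, hp⟩, hap, -⟩ := h a
    refine ⟨m, hm, ?_⟩
    rw [RingCon.coe_mk', TwoSidedIdeal.sub_mem_iff_coe_eq.1 hap, ← RingCon.coe_pow, ← hp]
  · intro H a
    obtain ⟨m, hpot, hmem⟩ := exists_isPotent_pow_sub_mem_of_quotient_potent (primeRadical R)
      (fun _ ↦ isNilpotent_of_mem_primeRadical) H a
    exact ⟨a ^ m, hpot, hmem, (Commute.self_pow a m).eq⟩
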